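/- arXiv:0907.3217 — 5 statements merged into one kernel-verified Lean document; each statement's English description precedes it below -/
import Mathlib

section
/- For nonnegative integers n, m with 0 ≤ m ≤ n, one has the polynomial identity (1/(2ⁿ n!)) · (z²-1)^{m} · d^{n+m}/dz^{n+m}[(z²-1)ⁿ] = ((n+m)!/(n-m)!) · (1/(2ⁿ n!)) · d^{n-m}/dz^{n-m}[(z²-1)ⁿ]. Equivalently, (z²-1)^m · d^{n+m}/dz^{n+m}(z²-1)ⁿ = ((n+m)!/(n-m)!) · d^{n-m}/dz^{n-m}(z²-1)ⁿ. -/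
/-!
Write `u = (X² - 1)ⁿ`. Then `(X² - 1) u' = 2n X u`, and differentiating this `k + 1` times gives
`(X² - 1) u⁽ᵏ⁺²⁾ = 2(n - k - 1) X u⁽ᵏ⁺¹⁾ + (k + 1)(2n - k) u⁽ᵏ⁾`.
Now induct on `m`: differentiate `(X² - 1)ᵐ u⁽ⁿ⁺ᵐ⁾ = cₘ u⁽ⁿ⁻ᵐ⁾` and multiply by `X² - 1`; by the
recurrence at `k = n - m - 1` the terms involving `X` cancel, leaving
`cₘ₊₁ = (n - m)(n + m + 1) cₘ`, so `cₘ = (n + m)! / (n - m)!`. No division is needed, so the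
identity holds over any commutative ring with `cₘ` the descending factorial.
-/

open Polynomial

namespace Polynomial

variable {R : Type*} [CommRing R]

theorem derivative_X_sq_sub_one : derivative (X ^ 2 - 1 : R[X]) = 2 * X := by
  rw [derivative_sub, derivative_X_pow, derivative_one, sub_zero, map_natCast]
  norm_num

theorem X_sq_sub_one_mul_derivative_pow (n : ℕ) :
    (X ^ 2 - 1 : R[X]) * derivative ((X ^ 2 - 1) ^ n) = 2 * (n : R[X]) * X * (X ^ 2 - 1) ^ n := by
  cases n with
  | zero => simp
  | succ n =>
    rw [derivative_pow_succ, derivative_X_sq_sub_one, C_add, C_1, C_eq_natCast]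
    push_cast
    ring

theorem X_sq_sub_one_mul_iterate_derivative_pow (n k : ℕ) :
    (X ^ 2 - 1 : R[X]) * derivative^[k + 2] ((X ^ 2 - 1) ^ n) =
      2 * ((n : R[X]) - ((k : R[X]) + 1)) * X * derivative^[k + 1] ((X ^ 2 - 1) ^ n) +
        ((k : R[X]) + 1) * (2 * (n : R[X]) - (k : R[X])) * derivative^[k] ((X ^ 2 - 1) ^ n) := by
  induction k with
  | zero =>
    have h := congrArg derivative (X_sq_sub_one_mul_derivative_pow (R := R) n)
    simp only [derivative_mul, derivative_X_sq_sub_one, derivative_X, derivative_natCast,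
      derivative_ofNat] at h
    simp only [Function.iterate_succ_apply', Function.iterate_zero_apply]
    push_cast
    linear_combination h
  | succ k ih =>
    have h := congrArg derivative ih
    simp only [derivative_mul, derivative_add, derivative_sub, derivative_X_pow, derivative_X,
      derivative_natCast, derivative_ofNat, derivative_one, map_ofNat, Nat.cast_ofNat,
      ← Function.iterate_succ_apply' derivative, Nat.succ_eq_add_one] at h
    push_cast
    linear_combination h

theorem X_sq_sub_one_pow_mul_iterate_derivative_pow {n m : ℕ} (h : m ≤ n) :
    (X ^ 2 - 1 : R[X]) ^ m * derivative^[n + m] ((X ^ 2 - 1) ^ n) =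
      ((n + m).descFactorial (2 * m) : R[X]) * derivative^[n - m] ((X ^ 2 - 1) ^ n) := by
  induction m with
  | zero => simp
  | succ m ih =>
    obtain ⟨k, rfl⟩ : ∃ k, n = m + k + 1 := ⟨n - m - 1, by omega⟩
    have hR := X_sq_sub_one_mul_iterate_derivative_pow (R := R) (m + k + 1) k
    set u : R[X] := (X ^ 2 - 1) ^ (m + k + 1)
    set c : R[X] := ((m + k + 1 + m).descFactorial (2 * m) : R[X])
    have hc_const : derivative c = 0 := derivative_natCast
    have hP : (X ^ 2 - 1) ^ m * derivative^[m + k + 1 + m] u = c * derivative^[k + 1] u := by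
      rw [ih (by omega), show m + k + 1 - m = k + 1 by omega]
    have hD := congrArg (fun p => (X ^ 2 - 1) * derivative p) hP
    simp only [derivative_mul, mul_add, ← mul_assoc, X_sq_sub_one_mul_derivative_pow, hc_const,
      zero_mul, zero_add, ← Function.iterate_succ_apply' derivative] at hD
    have hcoeff : (m + k + 1 + (m + 1)).descFactorial (2 * (m + 1)) =
        (m + k + 1 + m).descFactorial (2 * m) * ((k + 1) * (m + k + 1 + m + 1)) := by
      rw [show m + k + 1 + (m + 1) = m + k + 1 + m + 1 by omega,
        show 2 * (m + 1) = 2 * m + 1 + 1 by omega, Nat.succ_descFactorial_succ,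
        Nat.descFactorial_succ, show m + k + 1 + m - 2 * m = k + 1 by omega]
      ring
    rw [hcoeff, show m + k + 1 - (m + 1) = k by omega,
      show m + k + 1 + (m + 1) = (m + k + 1 + m).succ by omega, Nat.cast_mul]
    push_cast at hR ⊢
    linear_combination hD - 2 * (m : R[X]) * X * hP + c * hR

end Polynomial

theorem stmt_5 (n m : ℕ) (h : m ≤ n) :
    ((X : ℚ[X]) ^ 2 - 1) ^ m * (⇑(derivative (R := ℚ)))^[n + m] ((X ^ 2 - 1) ^ n) =
      C (((n + m).factorial : ℚ) / ((n - m).factorial : ℚ)) *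
        (⇑(derivative (R := ℚ)))^[n - m] ((X ^ 2 - 1) ^ n) := by
  rw [X_sq_sub_one_pow_mul_iterate_derivative_pow h, ← C_eq_natCast]
  congr 2
  rw [eq_div_iff (by positivity), mul_comm, ← Nat.cast_mul,
    show n - m = n + m - 2 * m by omega, Nat.factorial_mul_descFactorial (by omega)]
end

section
/- For nonnegative integers n, m with 0 ≤ m ≤ n, the following two Rodrigues-type expressions are equal as functions of z (equivalently, the underlying polynomial identity holds): (1/(2ⁿ(n-m)!)) · dⁿ/dzⁿ[(z-1)^{n-m}(z+1)^{n+m}] = ((z+1)/(z-1))^{m} · (1/(2ⁿ(n-m)!)) · dⁿ/dzⁿ[(z-1)^{n+m}(z+1)^{n-m}]; that is, (z-1)^m · dⁿ/dzⁿ[(z-1)^{n-m}(z+1)^{n+m}] = (z+1)^m · dⁿ/dzⁿ[(z-1)^{n+m}(z+1)^{n-m}]. -/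
open Polynomial Finset

private lemma coeff_key (n m i : ℕ) (hm : m ≤ n) (hi : i ≤ n - m) :
    n.choose i * ((n + m).descFactorial (n - i) * (n - m).descFactorial i) =
      n.choose (m + i) * ((n - m).descFactorial (n - (m + i)) *
        (n + m).descFactorial (m + i)) := by
  have h1 : i ≤ n := by omega
  have h2 : m + i ≤ n := by omega
  rw [Nat.descFactorial_eq_factorial_mul_choose, Nat.descFactorial_eq_factorial_mul_choose,
    Nat.descFactorial_eq_factorial_mul_choose, Nat.descFactorial_eq_factorial_mul_choose]
  rw [show n - (m + i) = (n - m) - i from by omega, Nat.choose_symm hi,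
    show m + i = (n + m) - (n - i) from by omega, Nat.choose_symm (by omega)]
  calc n.choose i * (Nat.factorial (n - i) * (n + m).choose (n - i) *
        (Nat.factorial i * (n - m).choose i))
      = (n.choose i * Nat.factorial i * Nat.factorial (n - i)) *
        ((n + m).choose (n - i) * (n - m).choose i) := by ring
    _ = (n.choose ((n + m) - (n - i)) * Nat.factorial ((n + m) - (n - i)) *
        Nat.factorial (n - ((n + m) - (n - i)))) *
        ((n + m).choose (n - i) * (n - m).choose i) := by
        rw [Nat.choose_mul_factorial_mul_factorial h1,
          Nat.choose_mul_factorial_mul_factorial (show (n + m) - (n - i) ≤ n by omega)]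
    _ = _ := by
        rw [show n - ((n + m) - (n - i)) = (n - m) - i from by omega,
          show (n + m) - (n - i) = m + i from by omega]
        ring

theorem stmt_8 (n m : ℕ) (h : m ≤ n) :
    ((X : ℚ[X]) - 1) ^ m *
        (⇑(derivative (R := ℚ)))^[n] ((X - 1) ^ (n - m) * (X + 1) ^ (n + m)) =
      (X + 1) ^ m *
        (⇑(derivative (R := ℚ)))^[n] ((X - 1) ^ (n + m) * (X + 1) ^ (n - m)) := by
  rw [show (1 : ℚ[X]) = C 1 from C_1.symm]
  have L : ((X : ℚ[X]) - C 1) ^ m *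
      (⇑(derivative (R := ℚ)))^[n] ((X - C 1) ^ (n - m) * (X + C 1) ^ (n + m)) =
      ∑ j ∈ range (n + 1),
        (n.choose j * ((n - m).descFactorial (n - j) * (n + m).descFactorial j)) •
          ((X - C 1) ^ j * (X + C 1) ^ (n + m - j)) := by
    rw [iterate_derivative_mul, Finset.mul_sum]
    refine Finset.sum_congr rfl fun k hk => ?_
    rw [Finset.mem_range] at hk
    rw [iterate_derivative_X_sub_pow, iterate_derivative_X_add_pow]
    rcases le_or_gt m k with h1 | h1
    · obtain ⟨t, rfl⟩ : ∃ t, k = m + t := ⟨k - m, by omega⟩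
      rw [show (n - m) - (n - (m + t)) = t from by omega]
      simp only [smul_mul_assoc, mul_smul_comm, smul_smul]
      congr 1
      · ring
      · rw [pow_add]; ring
    · have hz : (n - m).descFactorial (n - k) = 0 :=
        Nat.descFactorial_eq_zero_iff_lt.2 (by omega)
      simp [hz]
  have R : ((X : ℚ[X]) + C 1) ^ m *
      (⇑(derivative (R := ℚ)))^[n] ((X - C 1) ^ (n + m) * (X + C 1) ^ (n - m)) =
      ∑ k ∈ range (n + 1),
        (n.choose k * ((n + m).descFactorial (n - k) * (n - m).descFactorial k)) •
          ((X - C 1) ^ (m + k) * (X + C 1) ^ (n - k)) := by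
    rw [iterate_derivative_mul, Finset.mul_sum]
    refine Finset.sum_congr rfl fun k hk => ?_
    rw [Finset.mem_range] at hk
    rw [iterate_derivative_X_sub_pow, iterate_derivative_X_add_pow]
    rcases le_or_gt k (n - m) with h1 | h1
    · rw [show (n + m) - (n - k) = m + k from by omega]
      simp only [smul_mul_assoc, mul_smul_comm, smul_smul]
      congr 1
      · ring
      · rw [show n - k = m + ((n - m) - k) from by omega, pow_add]; ring
    · have hz : (n - m).descFactorial k = 0 :=
        Nat.descFactorial_eq_zero_iff_lt.2 (by omega)
      simp [hz]
  rw [L, R]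
  -- drop vanishing terms on both sides
  rw [show (n : ℕ) + 1 = n + 1 from rfl]
  have hL : ∑ j ∈ range (n + 1),
      (n.choose j * ((n - m).descFactorial (n - j) * (n + m).descFactorial j)) •
        ((X - C 1 : ℚ[X]) ^ j * (X + C 1) ^ (n + m - j)) =
      ∑ j ∈ Ico m (n + 1),
      (n.choose j * ((n - m).descFactorial (n - j) * (n + m).descFactorial j)) •
        ((X - C 1 : ℚ[X]) ^ j * (X + C 1) ^ (n + m - j)) := by
    rw [range_eq_Ico]
    refine (Finset.sum_subset (Finset.Ico_subset_Ico (by omega) le_rfl) ?_).symm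
    intro j hj hj'
    rw [Finset.mem_Ico] at hj hj'
    have hz : (n - m).descFactorial (n - j) = 0 :=
      Nat.descFactorial_eq_zero_iff_lt.2 (by omega)
    simp [hz]
  have hR : ∑ k ∈ range (n + 1),
      (n.choose k * ((n + m).descFactorial (n - k) * (n - m).descFactorial k)) •
        ((X - C 1 : ℚ[X]) ^ (m + k) * (X + C 1) ^ (n - k)) =
      ∑ k ∈ range (n - m + 1),
      (n.choose k * ((n + m).descFactorial (n - k) * (n - m).descFactorial k)) •
        ((X - C 1 : ℚ[X]) ^ (m + k) * (X + C 1) ^ (n - k)) := by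
    refine (Finset.sum_subset (Finset.range_subset_range.2 (by omega)) ?_).symm
    intro k hk hk'
    rw [Finset.mem_range] at hk hk'
    have hz : (n - m).descFactorial k = 0 :=
      Nat.descFactorial_eq_zero_iff_lt.2 (by omega)
    simp [hz]
  rw [hL, hR, Finset.sum_Ico_eq_sum_range]
  rw [show n + 1 - m = n - m + 1 from by omega]
  refine Finset.sum_congr rfl fun i hi => ?_
  rw [Finset.mem_range] at hi
  rw [← coeff_key n m i h (by omega), show n + m - (m + i) = n - i from by omega]
end

section
/- For all nonnegative integers n and m with m > n, Pₙ^{(-m,m)}(z) = ((-1)ⁿ/(n!(m-n-1)!)) Σ_{k=0}^{n} (-1)^k ((k+n)!(m-k-1)!/(k!(n-k)!)) ((z-1)/2)^k, where Pₙ^{(-m,m)}(z) = (1/(2ⁿn!))(z-1)^{m}(z+1)^{-m} dⁿ/dzⁿ[(z-1)^{n-m}(z+1)^{n+m}]. -/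
open Finset

lemma pascal_sum {M : Type*} [CommRing M] (j : ℕ) (T : ℕ → M) :
    ∑ k ∈ range (j + 2), (((j+1).choose k : ℕ) : M) * T k
      = ∑ k ∈ range (j + 1), ((j.choose k : ℕ) : M) * T k
        + ∑ k ∈ range (j + 1), ((j.choose k : ℕ) : M) * T (k + 1) := by
  rw [Finset.sum_range_succ' _ (j + 1),
      Finset.sum_range_succ' (fun k => ((j.choose k : ℕ) : M) * T k) j]
  simp only [Nat.choose_succ_succ, Nat.cast_add, add_mul, Finset.sum_add_distrib,
    Nat.choose_zero_right, Nat.cast_one, one_mul]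
  rw [Finset.sum_range_succ (fun k => ((j.choose (k+1) : ℕ) : M) * T (k+1)) j]
  simp [Nat.choose_succ_self]
  ring

lemma key : ∀ (j n m : ℕ), j < m →
    ∑ k ∈ range (j + 1), (j.choose k : ℤ) *
        ((-1 : ℤ) ^ k * ((m - k - 1).factorial : ℤ) * ((n + m).descFactorial k : ℤ))
      = (-1 : ℤ) ^ j * ((m - j - 1).factorial : ℤ) * ((n + j).descFactorial j : ℤ) := by
  intro j
  induction j with
  | zero => intro n m hm; simp
  | succ j ih =>
    intro n m hm
    rw [show j + 1 + 1 = j + 2 from rfl,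
      pascal_sum j (fun k => (-1 : ℤ) ^ k * ((m - k - 1).factorial : ℤ) *
        ((n + m).descFactorial k : ℤ))]
    have step : ∀ k ∈ range (j + 1),
        (j.choose k : ℤ) * ((-1:ℤ)^k * ((m - k - 1).factorial : ℤ) * ((n + m).descFactorial k : ℤ))
          + (j.choose k : ℤ) * ((-1:ℤ)^(k+1) * ((m - (k+1) - 1).factorial : ℤ) *
              ((n + m).descFactorial (k+1) : ℤ))
        = (-((n:ℤ)+1)) * ((j.choose k : ℤ) *
            ((-1:ℤ)^k * (((m-1) - k - 1).factorial : ℤ) * (((n+1) + (m-1)).descFactorial k : ℤ))) := by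
      intro k hk
      rw [mem_range] at hk
      have hk2 : k + 2 ≤ m := by omega
      have e1 : m - k - 1 = (m - k - 2) + 1 := by omega
      have e2 : m - (k+1) - 1 = m - k - 2 := by omega
      have e3 : (m-1) - k - 1 = m - k - 2 := by omega
      have e4 : (n+1) + (m-1) = n + m := by omega
      rw [e1, e2, e3, e4, Nat.factorial_succ, Nat.descFactorial_succ]
      have e5 : ((n + m - k : ℕ) : ℤ) = (n : ℤ) + m - k := by
        have : k ≤ n + m := by omega
        omega
      push_cast [e5]
      have e6 : ((m - k - 2 : ℕ) : ℤ) = (m : ℤ) - k - 2 := by omega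
      rw [e6]
      ring
    rw [← Finset.sum_add_distrib, Finset.sum_congr rfl step, ← Finset.mul_sum, ih (n+1) (m-1) (by omega)]
    have e7 : (n + 1 + j) = (n + (j+1)) := by omega
    have e8 : (m - 1) - j - 1 = m - (j+1) - 1 := by omega
    rw [e7, e8, Nat.descFactorial_succ]
    have e9 : ((n + (j+1) - j : ℕ) : ℤ) = (n : ℤ) + 1 := by omega
    push_cast [e9]
    ring


lemma prod_desc (a : ℕ) : ∀ k : ℕ, ∏ i ∈ range k, ((a : ℂ) - i) = (a.descFactorial k : ℂ) := by
  intro k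
  induction k with
  | zero => simp
  | succ k ih =>
    rw [Finset.prod_range_succ, ih, Nat.descFactorial_succ]
    rcases le_or_gt k a with hka | hak
    · have : ((a - k : ℕ) : ℂ) = (a : ℂ) - k := by
        push_cast [Nat.cast_sub hka]; ring
      rw [Nat.cast_mul, this]; ring
    · have h0 : a.descFactorial k = 0 := Nat.descFactorial_eq_zero_iff_lt.mpr hak
      simp [h0]

lemma prodB (n m : ℕ) (h : n < m) (i : ℕ) :
    ∏ l ∈ range i, ((n : ℂ) - m - l)
      = (-1 : ℂ) ^ i * ((m - n - 1 + i).descFactorial i : ℂ) := by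
  have h1 : ∏ l ∈ range i, ((n : ℂ) - m - l) = (-1:ℂ)^i * ∏ l ∈ range i, ((m : ℂ) - n + l) := by
    rw [show (-1:ℂ)^i = ∏ _l ∈ range i, (-1:ℂ) by simp, ← Finset.prod_mul_distrib]
    refine Finset.prod_congr rfl fun l _ => by ring
  rw [h1, ← Finset.prod_range_reflect]
  congr 1
  rw [← prod_desc (m - n - 1 + i) i]
  refine Finset.prod_congr rfl fun l hl => ?_
  rw [mem_range] at hl
  have e1 : ((i - 1 - l : ℕ) : ℂ) = (i : ℂ) - 1 - l := by
    have : ((i - 1 - l : ℕ) : ℤ) = (i : ℤ) - 1 - l := by omega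
    exact_mod_cast congrArg (Int.cast : ℤ → ℂ) this
  have e2 : ((m - n - 1 + i : ℕ) : ℂ) = (m : ℂ) - n - 1 + i := by
    have : ((m - n - 1 + i : ℕ) : ℤ) = (m : ℤ) - n - 1 + i := by omega
    exact_mod_cast congrArg (Int.cast : ℤ → ℂ) this
  rw [e1, e2]
  ring

lemma key2 (n m j : ℕ) (hj : j ≤ n) (hnm : n < m) :
    (∑ k ∈ range (j + 1), (-1 : ℤ) ^ (n - k) * (n.choose k : ℤ) * ((n - k).choose (j - k) : ℤ)
        * ((n + m).descFactorial k : ℤ) * ((m - k - 1).descFactorial (n - k) : ℤ))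
      * (((m - n - 1).factorial : ℤ) * ((j.factorial : ℤ) * ((n - j).factorial : ℤ)))
    = (-1 : ℤ) ^ (n + j) * ((j + n).factorial : ℤ) * ((m - j - 1).factorial : ℤ) := by
  rw [Finset.sum_mul]
  have per : ∀ k ∈ range (j + 1),
      ((-1 : ℤ) ^ (n - k) * (n.choose k : ℤ) * ((n - k).choose (j - k) : ℤ)
        * ((n + m).descFactorial k : ℤ) * ((m - k - 1).descFactorial (n - k) : ℤ))
        * (((m - n - 1).factorial : ℤ) * ((j.factorial : ℤ) * ((n - j).factorial : ℤ)))
      = ((-1 : ℤ) ^ n * (n.choose j : ℤ) * (j.factorial : ℤ) * ((n - j).factorial : ℤ))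
        * ((j.choose k : ℤ) *
          ((-1 : ℤ) ^ k * ((m - k - 1).factorial : ℤ) * ((n + m).descFactorial k : ℤ))) := by
    intro k hk
    rw [mem_range] at hk
    have hkj : k ≤ j := by omega
    have f1 : (-1 : ℤ) ^ (n - k) = (-1 : ℤ) ^ n * (-1 : ℤ) ^ k := by
      have h' : ((-1 : ℤ)) ^ n = (-1 : ℤ) ^ (n - k) * (-1 : ℤ) ^ k := by
        rw [← pow_add]; congr 1; omega
      rw [h', mul_assoc, ← pow_add, show k + k = 2 * k from by ring, pow_mul]
      simp
    have f2 : (n.choose j : ℤ) * (j.choose k : ℤ) = (n.choose k : ℤ) * ((n - k).choose (j - k) : ℤ) := by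
      exact_mod_cast congrArg (Nat.cast : ℕ → ℤ) (Nat.choose_mul (n := n) hkj)
    have f3 : ((m - n - 1).factorial : ℤ) * ((m - k - 1).descFactorial (n - k) : ℤ)
        = ((m - k - 1).factorial : ℤ) := by
      have e : m - k - 1 - (n - k) = m - n - 1 := by omega
      have := Nat.factorial_mul_descFactorial (show n - k ≤ m - k - 1 by omega)
      rw [e] at this
      exact_mod_cast congrArg (Nat.cast : ℕ → ℤ) this
    rw [f1]
    linear_combination ((-1:ℤ)^n * (-1:ℤ)^k * (n.choose k : ℤ) * ((n-k).choose (j-k) : ℤ)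
        * ((n+m).descFactorial k : ℤ) * ((j.factorial : ℤ) * ((n - j).factorial : ℤ))) * f3
      - ((-1:ℤ)^n * (-1:ℤ)^k * ((n+m).descFactorial k : ℤ) * ((m - k - 1).factorial : ℤ)
        * ((j.factorial : ℤ) * ((n - j).factorial : ℤ))) * f2
  rw [Finset.sum_congr rfl per, ← Finset.mul_sum, key j n m (by omega)]
  have g1 : (n.choose j : ℤ) * (j.factorial : ℤ) * ((n - j).factorial : ℤ) = (n.factorial : ℤ) := by
    exact_mod_cast congrArg (Nat.cast : ℕ → ℤ) (Nat.choose_mul_factorial_mul_factorial hj)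
  have g2 : (n.factorial : ℤ) * ((n + j).descFactorial j : ℤ) = ((j + n).factorial : ℤ) := by
    have e : n + j - j = n := by omega
    have := Nat.factorial_mul_descFactorial (show j ≤ n + j by omega)
    rw [e] at this
    have e2 : n + j = j + n := by omega
    rw [e2] at this ⊢
    exact_mod_cast congrArg (Nat.cast : ℕ → ℤ) this
  have g3 : (-1 : ℤ) ^ (n + j) = (-1 : ℤ) ^ n * (-1 : ℤ) ^ j := pow_add _ _ _
  rw [g3]
  linear_combination ((-1:ℤ)^n * (-1:ℤ)^j * ((m - j - 1).factorial : ℤ)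
      * ((n + j).descFactorial j : ℤ)) * g1
    + ((-1:ℤ)^n * (-1:ℤ)^j * ((m - j - 1).factorial : ℤ)) * g2

lemma iter_deriv (n m : ℕ) (j : ℕ) :
    ∀ z : ℂ, z ≠ 1 → z ≠ -1 →
    iteratedDeriv j (fun w : ℂ => (w - 1) ^ ((n : ℤ) - m) * (w + 1) ^ ((n : ℤ) + m)) z
      = ∑ k ∈ range (j + 1), (j.choose k : ℂ)
          * ((∏ i ∈ range k, ((n : ℂ) + m - i))
          * (∏ l ∈ range (j - k), ((n : ℂ) - m - l))
          * ((z - 1) ^ ((n : ℤ) - m - (j - k : ℕ)) * (z + 1) ^ ((n : ℤ) + m - k))) := by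
  induction j with
  | zero => intro z hz1 hz2; simp
  | succ j ih =>
    intro z hz1 hz2
    have hz1' : z - 1 ≠ 0 := sub_ne_zero.mpr hz1
    have hz2' : z + 1 ≠ 0 := fun hc => hz2 (by linear_combination hc)
    rw [iteratedDeriv_succ]
    have hev : (iteratedDeriv j (fun w : ℂ => (w - 1) ^ ((n : ℤ) - m) * (w + 1) ^ ((n : ℤ) + m)))
        =ᶠ[nhds z] (fun z => ∑ k ∈ range (j + 1), (j.choose k : ℂ)
          * ((∏ i ∈ range k, ((n : ℂ) + m - i))
          * (∏ l ∈ range (j - k), ((n : ℂ) - m - l))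
          * ((z - 1) ^ ((n : ℤ) - m - (j - k : ℕ)) * (z + 1) ^ ((n : ℤ) + m - k)))) := by
      filter_upwards [eventually_ne_nhds hz1, eventually_ne_nhds hz2] with w hw1 hw2
      exact ih w hw1 hw2
    rw [hev.deriv_eq]
    -- derivative of each summand
    have hterm : ∀ k ∈ range (j+1), HasDerivAt (fun w : ℂ => (j.choose k : ℂ)
          * ((∏ i ∈ range k, ((n : ℂ) + m - i))
          * (∏ l ∈ range (j - k), ((n : ℂ) - m - l))
          * ((w - 1) ^ ((n : ℤ) - m - (j - k : ℕ)) * (w + 1) ^ ((n : ℤ) + m - k))))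
        ((j.choose k : ℂ) * ((∏ i ∈ range k, ((n : ℂ) + m - i))
          * (∏ l ∈ range (j - k), ((n : ℂ) - m - l))
          * ((((n : ℤ) - m - (j - k : ℕ)) * (z - 1) ^ ((n : ℤ) - m - (j - k : ℕ) - 1) * (z + 1) ^ ((n : ℤ) + m - k))
            + ((z - 1) ^ ((n : ℤ) - m - (j - k : ℕ)) * (((n : ℤ) + m - k) * (z + 1) ^ ((n : ℤ) + m - k - 1)))))) z := by
      intro k _
      have h1 : HasDerivAt (fun w : ℂ => (w - 1) ^ ((n : ℤ) - m - (j - k : ℕ)))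
          (((n : ℤ) - m - (j - k : ℕ)) * (z - 1) ^ ((n : ℤ) - m - (j - k : ℕ) - 1)) z := by
        simpa [Function.comp_def] using (hasDerivAt_zpow ((n : ℤ) - m - (j - k : ℕ)) (z-1) (Or.inl hz1')).comp z
          ((hasDerivAt_id z).sub_const 1)
      have h2 : HasDerivAt (fun w : ℂ => (w + 1) ^ ((n : ℤ) + m - k))
          (((n : ℤ) + m - k) * (z + 1) ^ ((n : ℤ) + m - k - 1)) z := by
        simpa [Function.comp_def] using (hasDerivAt_zpow ((n : ℤ) + m - k) (z+1) (Or.inl hz2')).comp z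
          ((hasDerivAt_id z).add_const 1)
      exact ((h1.mul h2).const_mul _).const_mul _
    have := HasDerivAt.fun_sum hterm
    rw [this.deriv]
    rw [show j + 1 + 1 = j + 2 from rfl,
      pascal_sum j (fun k => (∏ i ∈ range k, ((n : ℂ) + m - i))
          * (∏ l ∈ range (j + 1 - k), ((n : ℂ) - m - l))
          * ((z - 1) ^ ((n : ℤ) - m - (j + 1 - k : ℕ)) * (z + 1) ^ ((n : ℤ) + m - k)))]
    have split : ∀ k ∈ range (j+1), (j.choose k : ℂ) * ((∏ i ∈ range k, ((n : ℂ) + m - i))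
          * (∏ l ∈ range (j - k), ((n : ℂ) - m - l))
          * ((((n : ℤ) - m - (j - k : ℕ)) * (z - 1) ^ ((n : ℤ) - m - (j - k : ℕ) - 1) * (z + 1) ^ ((n : ℤ) + m - k))
            + ((z - 1) ^ ((n : ℤ) - m - (j - k : ℕ)) * (((n : ℤ) + m - k) * (z + 1) ^ ((n : ℤ) + m - k - 1)))))
        = (j.choose k : ℂ) * ((∏ i ∈ range k, ((n : ℂ) + m - i))
          * (∏ l ∈ range (j + 1 - k), ((n : ℂ) - m - l))
          * ((z - 1) ^ ((n : ℤ) - m - (j + 1 - k : ℕ)) * (z + 1) ^ ((n : ℤ) + m - k)))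
        + (j.choose k : ℂ) * ((∏ i ∈ range (k+1), ((n : ℂ) + m - i))
          * (∏ l ∈ range (j + 1 - (k+1)), ((n : ℂ) - m - l))
          * ((z - 1) ^ ((n : ℤ) - m - (j + 1 - (k+1) : ℕ)) * (z + 1) ^ ((n : ℤ) + m - (k+1)))) := by
      intro k hk
      rw [mem_range] at hk
      have e1 : j + 1 - k = (j - k) + 1 := by omega
      have e2 : j + 1 - (k + 1) = j - k := by omega
      rw [e1, e2, Finset.prod_range_succ, Finset.prod_range_succ]
      push_cast
      rw [show (n:ℤ) - m - ((j - k : ℕ) + 1) = (n:ℤ) - m - (j - k : ℕ) - 1 from by ring,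
          show (n:ℤ) + m - ((k:ℤ) + 1) = (n:ℤ) + m - k - 1 from by ring]
      ring
    rw [Finset.sum_congr rfl split, Finset.sum_add_distrib]
    norm_cast

lemma perk (n m k : ℕ) (hk : k ≤ n) (hnm : n < m) {z : ℂ} (hz1' : z - 1 ≠ 0) (hz2' : z + 1 ≠ 0) :
    1 / ((2 : ℂ) ^ n * n.factorial) * (z - 1) ^ m * (z + 1) ^ (-(m : ℤ)) *
      ((n.choose k : ℂ) * ((∏ i ∈ range k, ((n : ℂ) + m - i))
        * (∏ l ∈ range (n - k), ((n : ℂ) - m - l))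
        * ((z - 1) ^ ((n : ℤ) - m - (n - k : ℕ)) * (z + 1) ^ ((n : ℤ) + m - k))))
    = ∑ i ∈ range (n + 1 - k),
        1 / ((2 : ℂ) ^ n * n.factorial) * ((-1 : ℂ) ^ (n - k) * (n.choose k : ℂ)
          * ((n - k).choose i : ℂ) * (((n + m).descFactorial k : ℕ) : ℂ)
          * (((m - k - 1).descFactorial (n - k) : ℕ) : ℂ))
          * 2 ^ ((n - k) - i) * (z - 1) ^ (k + i) := by
  have hA : ∏ i ∈ range k, ((n : ℂ) + m - i) = (((n + m).descFactorial k : ℕ) : ℂ) := by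
    rw [← prod_desc]
    exact Finset.prod_congr rfl fun i _ => by push_cast; ring
  have hB : ∏ l ∈ range (n - k), ((n : ℂ) - m - l)
      = (-1 : ℂ) ^ (n - k) * (((m - k - 1).descFactorial (n - k) : ℕ) : ℂ) := by
    rw [prodB n m hnm (n - k), show m - n - 1 + (n - k) = m - k - 1 from by omega]
  have hP1 : (z - 1) ^ (m : ℕ) * (z - 1) ^ ((n : ℤ) - m - (n - k : ℕ)) = (z - 1) ^ (k : ℕ) := by
    rw [← zpow_natCast (z - 1) m, ← zpow_add₀ hz1', ← zpow_natCast (z - 1) k]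
    congr 1
    have e : ((n - k : ℕ) : ℤ) = (n : ℤ) - k := by omega
    rw [e]; ring
  have hP2 : (z + 1) ^ (-(m : ℤ)) * (z + 1) ^ ((n : ℤ) + m - k) = (z + 1) ^ ((n - k : ℕ)) := by
    rw [← zpow_add₀ hz2', ← zpow_natCast (z + 1) (n - k)]
    congr 1
    have e : ((n - k : ℕ) : ℤ) = (n : ℤ) - k := by omega
    rw [e]; ring
  calc 1 / ((2 : ℂ) ^ n * n.factorial) * (z - 1) ^ m * (z + 1) ^ (-(m : ℤ)) *
      ((n.choose k : ℂ) * ((∏ i ∈ range k, ((n : ℂ) + m - i))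
        * (∏ l ∈ range (n - k), ((n : ℂ) - m - l))
        * ((z - 1) ^ ((n : ℤ) - m - (n - k : ℕ)) * (z + 1) ^ ((n : ℤ) + m - k))))
      = (1 / ((2 : ℂ) ^ n * n.factorial) * ((-1 : ℂ) ^ (n - k) * (n.choose k : ℂ)
          * (((n + m).descFactorial k : ℕ) : ℂ) * (((m - k - 1).descFactorial (n - k) : ℕ) : ℂ)))
        * ((z - 1) ^ (m : ℕ) * (z - 1) ^ ((n : ℤ) - m - (n - k : ℕ)))
        * ((z + 1) ^ (-(m : ℤ)) * (z + 1) ^ ((n : ℤ) + m - k)) := by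
        rw [hA, hB]; ring
    _ = (1 / ((2 : ℂ) ^ n * n.factorial) * ((-1 : ℂ) ^ (n - k) * (n.choose k : ℂ)
          * (((n + m).descFactorial k : ℕ) : ℂ) * (((m - k - 1).descFactorial (n - k) : ℕ) : ℂ)))
        * (z - 1) ^ (k : ℕ) * (z + 1) ^ ((n - k : ℕ)) := by rw [hP1, hP2]
    _ = _ := by
        rw [show z + 1 = (z - 1) + 2 from by ring, add_pow, Finset.mul_sum,
          show n - k + 1 = n + 1 - k from by omega]
        refine Finset.sum_congr rfl fun i _ => ?_
        rw [pow_add]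
        ring

lemma perj (n m j : ℕ) (hj : j ≤ n) (hnm : n < m) (u : ℂ) :
    ∑ k ∈ range (j + 1),
        1 / ((2 : ℂ) ^ n * n.factorial) * ((-1 : ℂ) ^ (n - k) * (n.choose k : ℂ)
          * ((n - k).choose (j - k) : ℂ) * (((n + m).descFactorial k : ℕ) : ℂ)
          * (((m - k - 1).descFactorial (n - k) : ℕ) : ℂ))
          * 2 ^ ((n - k) - (j - k)) * u ^ (k + (j - k))
    = (-1 : ℂ) ^ n / ((n.factorial : ℂ) * ((m - n - 1).factorial : ℂ)) *
        ((-1 : ℂ) ^ j *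
          (((j + n).factorial : ℂ) * ((m - j - 1).factorial : ℂ) /
            ((j.factorial : ℂ) * ((n - j).factorial : ℂ))) *
          (u / 2) ^ j) := by
  have hsum : ∀ k ∈ range (j + 1),
      1 / ((2 : ℂ) ^ n * n.factorial) * ((-1 : ℂ) ^ (n - k) * (n.choose k : ℂ)
          * ((n - k).choose (j - k) : ℂ) * (((n + m).descFactorial k : ℕ) : ℂ)
          * (((m - k - 1).descFactorial (n - k) : ℕ) : ℂ))
          * 2 ^ ((n - k) - (j - k)) * u ^ (k + (j - k))
      = ((-1 : ℂ) ^ (n - k) * (n.choose k : ℂ)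
          * ((n - k).choose (j - k) : ℂ) * (((n + m).descFactorial k : ℕ) : ℂ)
          * (((m - k - 1).descFactorial (n - k) : ℕ) : ℂ))
        * (1 / ((2 : ℂ) ^ n * n.factorial) * 2 ^ (n - j) * u ^ j) := by
    intro k hk
    rw [mem_range] at hk
    rw [show (n - k) - (j - k) = n - j from by omega, show k + (j - k) = j from by omega]
    ring
  rw [Finset.sum_congr rfl hsum, ← Finset.sum_mul]
  have h2 : (2 : ℂ) ≠ 0 := two_ne_zero
  have hfn : ((n.factorial : ℕ) : ℂ) ≠ 0 := Nat.cast_ne_zero.mpr n.factorial_ne_zero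
  have hfm : (((m - n - 1).factorial : ℕ) : ℂ) ≠ 0 := Nat.cast_ne_zero.mpr (Nat.factorial_ne_zero _)
  have hfj : ((j.factorial : ℕ) : ℂ) ≠ 0 := Nat.cast_ne_zero.mpr (Nat.factorial_ne_zero _)
  have hfnj : (((n - j).factorial : ℕ) : ℂ) ≠ 0 := Nat.cast_ne_zero.mpr (Nat.factorial_ne_zero _)
  have hS : (∑ k ∈ range (j + 1), (-1 : ℂ) ^ (n - k) * (n.choose k : ℂ)
        * ((n - k).choose (j - k) : ℂ) * (((n + m).descFactorial k : ℕ) : ℂ)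
        * (((m - k - 1).descFactorial (n - k) : ℕ) : ℂ))
      = ((-1 : ℂ) ^ n * (-1 : ℂ) ^ j * ((j + n).factorial : ℂ) * ((m - j - 1).factorial : ℂ))
        / (((m - n - 1).factorial : ℂ) * ((j.factorial : ℂ) * ((n - j).factorial : ℂ))) := by
    rw [eq_div_iff (by exact mul_ne_zero hfm (mul_ne_zero hfj hfnj))]
    have := congrArg (Int.cast : ℤ → ℂ) (key2 n m j hj hnm)
    push_cast at this
    rw [pow_add] at this
    linear_combination this
  rw [hS, show (2 : ℂ) ^ (n - j) = 2 ^ n / 2 ^ j from by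
    rw [eq_div_iff (pow_ne_zero _ h2), ← pow_add]; congr 1; omega]
  field_simp
  rw [mul_assoc _ ((2:ℂ)^j), ← mul_pow, show (2:ℂ) * (u/2) = u by field_simp]

theorem stmt_14 (n m : ℕ) (h : n < m) (z : ℂ) (hz1 : z ≠ 1) (hz2 : z ≠ -1) :
    1 / ((2 : ℂ) ^ n * n.factorial) * (z - 1) ^ m * (z + 1) ^ (-(m : ℤ)) *
        iteratedDeriv n (fun w : ℂ => (w - 1) ^ ((n : ℤ) - m) * (w + 1) ^ ((n : ℤ) + m)) z =
      (-1 : ℂ) ^ n / ((n.factorial : ℂ) * ((m - n - 1).factorial : ℂ)) *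
        ∑ k ∈ Finset.range (n + 1),
          (-1 : ℂ) ^ k *
              (((k + n).factorial : ℂ) * ((m - k - 1).factorial : ℂ) /
                ((k.factorial : ℂ) * ((n - k).factorial : ℂ))) *
            ((z - 1) / 2) ^ k := by
  have hz1' : z - 1 ≠ 0 := sub_ne_zero.mpr hz1
  have hz2' : z + 1 ≠ 0 := fun hc => hz2 (by linear_combination hc)
  rw [iter_deriv n m n z hz1 hz2, Finset.mul_sum, Finset.mul_sum]
  rw [Finset.sum_congr rfl (fun k hk =>
    perk n m k (by rw [mem_range] at hk; omega) h hz1' hz2')]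
  rw [← Finset.sum_range_diag_flip (n + 1) (fun k i =>
    1 / ((2 : ℂ) ^ n * n.factorial) * ((-1 : ℂ) ^ (n - k) * (n.choose k : ℂ)
      * ((n - k).choose i : ℂ) * (((n + m).descFactorial k : ℕ) : ℂ)
      * (((m - k - 1).descFactorial (n - k) : ℕ) : ℂ))
      * 2 ^ ((n - k) - i) * (z - 1) ^ (k + i))]
  refine Finset.sum_congr rfl fun j hj => ?_
  rw [mem_range] at hj
  exact perj n m j (by omega) h (z - 1)
end

section
/- For every nonnegative integer n, the following identity of polynomials in z over ℚ holds: 2(H_{2n} − H_n)·Pₙ(z) + 2 Σ_{k=0}^{n-1} (-1)^{k+n} (2k+1)/((n-k)(k+n+1)) · Pₖ(z) = 2 Σ_{k=0}^{n} (-1)^{k+n} ((k+n)!/((k!)²(n-k)!)) (H_{k+n} - H_k) ((z+1)/2)^k, where Pⱼ is the j-th Legendre polynomial and H_j the j-th harmonic number. -/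
open Polynomial Finset

/-- The `j`-th Legendre polynomial over `ℚ`, via the Rodrigues formula. -/
noncomputable def legendreQ (j : ℕ) : Polynomial ℚ :=
  C (1 / ((2 : ℚ) ^ j * j.factorial)) * (⇑(derivative (R := ℚ)))^[j] ((X ^ 2 - 1) ^ j)

private def dd (k m : ℕ) : ℚ := (k.choose m : ℚ) * ((k + m).choose m : ℚ)

private lemma dd_succ (k m : ℕ) : dd (k+1) m * ((k:ℚ) + 1 - m) = dd k m * ((k:ℚ) + 1 + m) := by
  rcases le_or_gt m (k+1) with h | h
  · have h1 := congrArg (Nat.cast : ℕ → ℚ) (Nat.choose_mul_succ_eq k m)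
    have h2 := congrArg (Nat.cast : ℕ → ℚ) (Nat.choose_mul_succ_eq (k+m) m)
    have e1 : k + m + 1 - m = k + 1 := by omega
    rw [e1] at h2
    push_cast [Nat.cast_sub h] at h1 h2
    unfold dd
    have e3 : k + 1 + m = k + m + 1 := by omega
    rw [e3]
    push_cast
    linear_combination (-(((k+m+1).choose m : ℚ))) * h1 - (k.choose m : ℚ) * h2
  · have hk : k < m := by omega
    simp [dd, Nat.choose_eq_zero_of_lt h, Nat.choose_eq_zero_of_lt hk]

private lemma dd_fact {k n : ℕ} (h : k ≤ n) :
    ((k+n).factorial : ℚ) / ((k.factorial : ℚ)^2 * ((n-k).factorial : ℚ)) = dd n k := by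
  have c1 := congrArg (Nat.cast : ℕ → ℚ) (Nat.choose_mul_factorial_mul_factorial h)
  have c2 := congrArg (Nat.cast : ℕ → ℚ)
    (Nat.choose_mul_factorial_mul_factorial (Nat.le_add_left k n))
  rw [Nat.add_sub_cancel] at c2
  push_cast at c1 c2
  unfold dd
  rw [div_eq_iff (by positivity)]
  have e : k + n = n + k := by omega
  rw [e]
  linear_combination (-((((n+k).choose k) : ℚ) * (k.factorial : ℚ))) * c1 - c2

private lemma legendre_prod (j : ℕ) : legendreQ j =
    ∑ i ∈ range (j+1), C (((j.choose i : ℚ))^2 / 2^j) * ((X + C (-1))^i * (X + C 1)^(j-i)) := by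
  have hXX : ((X:ℚ[X])^2 - 1)^j = ((X + C (-1))^j) * ((X + C 1)^j) := by
    rw [← mul_pow]; congr 1
    simp only [C_1, C_neg]
    ring
  rw [legendreQ, hXX, Polynomial.iterate_derivative_mul]
  rw [Finset.mul_sum]
  refine Finset.sum_congr rfl fun i hi => ?_
  have hij : i ≤ j := Nat.lt_succ_iff.mp (Finset.mem_range.mp hi)
  rw [Polynomial.iterate_derivative_X_add_pow, Polynomial.iterate_derivative_X_add_pow]
  have e1 : j - (j - i) = i := by omega
  rw [e1]
  have hc : (j.choose i : ℚ) * (1 / ((2:ℚ)^j * j.factorial) *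
      ((j.descFactorial (j-i) : ℚ) * (j.descFactorial i : ℚ))) = ((j.choose i : ℚ))^2 / 2^j := by
    have d1 : j.descFactorial (j-i) = (j-i).factorial * (j.choose (j-i)) :=
      Nat.descFactorial_eq_factorial_mul_choose j (j-i)
    have d2 : j.descFactorial i = i.factorial * (j.choose i) :=
      Nat.descFactorial_eq_factorial_mul_choose j i
    have hsymm : j.choose (j-i) = j.choose i := Nat.choose_symm hij
    have hfac := congrArg (Nat.cast : ℕ → ℚ) (Nat.choose_mul_factorial_mul_factorial hij)
    rw [d1, d2, hsymm]
    push_cast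
    push_cast at hfac
    have h2 : ((2:ℚ))^j ≠ 0 := by positivity
    have hf : (j.factorial : ℚ) ≠ 0 := Nat.cast_ne_zero.2 j.factorial_ne_zero
    field_simp
    linear_combination (((j.choose i : ℚ))^2) * hfac
  rw [← hc]
  simp only [nsmul_eq_mul, ← C_eq_natCast, C_mul]
  ring

private lemma vander (j r : ℕ) (hr : r ≤ j) :
    ∑ i ∈ range (r+1), (j.choose i)^2 * ((j-i).choose (r-i)) = j.choose r * (j+r).choose r := by
  have step : ∀ i ∈ range (r+1),
      (j.choose i)^2 * ((j-i).choose (r-i)) = j.choose r * (r.choose i * j.choose i) := by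
    intro i hi
    have hir : i ≤ r := Nat.lt_succ_iff.mp (mem_range.mp hi)
    have h := Nat.choose_mul (n := j) hir
    calc (j.choose i)^2 * ((j-i).choose (r-i))
        = (j.choose i * (j-i).choose (r-i)) * j.choose i := by ring
      _ = (j.choose r * r.choose i) * j.choose i := by rw [← h]
      _ = j.choose r * (r.choose i * j.choose i) := by ring
  rw [Finset.sum_congr rfl step, ← Finset.mul_sum]
  congr 1
  have hv := Nat.add_choose_eq r j r
  rw [Finset.Nat.sum_antidiagonal_eq_sum_range_succ_mk] at hv
  have e : (j+r).choose r = (r+j).choose r := by rw [Nat.add_comm]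
  rw [e, hv, ← Finset.sum_range_reflect]
  refine Finset.sum_congr rfl fun i hi => ?_
  have hir : i ≤ r := Nat.lt_succ_iff.mp (mem_range.mp hi)
  have e2 : r + 1 - 1 - i = r - i := by omega
  rw [e2, Nat.choose_symm hir]

private lemma poly_Y (j : ℕ) :
    ∑ i ∈ range (j+1), C ((j.choose i : ℚ)^2) * ((X + C (-1))^i * X^(j-i)) =
    ∑ m ∈ range (j+1), C ((-1:ℚ)^(j+m) * dd j m) * X^m := by
  apply Polynomial.ext
  intro r
  rw [Polynomial.finset_sum_coeff, Polynomial.finset_sum_coeff]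
  simp only [Polynomial.coeff_C_mul, Polynomial.coeff_mul_X_pow', Polynomial.coeff_X_pow,
    Polynomial.coeff_X_add_C_pow, Polynomial.coeff_C]
  have hR : ∑ x ∈ range (j + 1),
      (if x ≤ r then (if r - x = 0 then ((-1:ℚ)) ^ (j + x) * dd j x else 0) else 0)
      = if r ∈ range (j+1) then ((-1:ℚ))^(j+r) * dd j r else 0 := by
    rw [← Finset.sum_ite_eq' (range (j+1)) r (fun x => ((-1:ℚ))^(j+x) * dd j x)]
    refine Finset.sum_congr rfl fun x hx => ?_
    by_cases hxr : x = r
    · subst hxr; simp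
    · rcases Nat.lt_or_ge r x with h | h
      · rw [if_neg (by omega), if_neg (by omega)]
      · rw [if_pos (by omega), if_neg (by omega), if_neg (by omega)]
  rw [hR]
  rcases Nat.lt_or_ge j r with hjr | hrj
  · rw [if_neg (by simp only [mem_range]; omega)]
    refine Finset.sum_eq_zero fun x hx => ?_
    have hxj : x ≤ j := Nat.lt_succ_iff.mp (mem_range.mp hx)
    have hz : x.choose (r - (j - x)) = 0 := Nat.choose_eq_zero_of_lt (by omega)
    rw [if_pos (by omega), hz]
    simp
  · rw [if_pos (by simp only [mem_range]; omega)]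
    rw [← Finset.sum_range_reflect]
    have hL : ∀ x ∈ range (j+1),
        (↑(j.choose (j + 1 - 1 - x)) : ℚ) ^ 2 *
          (if j - (j + 1 - 1 - x) ≤ r then
            ((-1:ℚ)) ^ ((j + 1 - 1 - x) - (r - (j - (j + 1 - 1 - x)))) *
              ↑((j + 1 - 1 - x).choose (r - (j - (j + 1 - 1 - x)))) else 0)
        = (if x ≤ r then ((-1:ℚ))^(j-r) * ((j.choose x:ℚ)^2 * ((j-x).choose (r-x) : ℚ)) else 0) := by
      intro x hx
      have hxj : x ≤ j := Nat.lt_succ_iff.mp (mem_range.mp hx)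
      have e1 : j + 1 - 1 - x = j - x := by omega
      have e2 : j - (j - x) = x := by omega
      rw [e1, e2]
      by_cases hxr : x ≤ r
      · rw [if_pos hxr, if_pos hxr]
        have e3 : (j - x) - (r - x) = j - r := by omega
        rw [e3, Nat.choose_symm hxj]
        ring
      · rw [if_neg hxr, if_neg hxr, mul_zero]
    rw [Finset.sum_congr rfl hL]
    have hsub : range (r+1) ⊆ range (j+1) := Finset.range_subset_range.mpr (by omega)
    rw [← Finset.sum_subset hsub (fun x _ hxn => if_neg (by simp at hxn ⊢; omega))]
    rw [Finset.sum_congr rfl (fun x hx => if_pos (Nat.lt_succ_iff.mp (mem_range.mp hx)))]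
    rw [← Finset.mul_sum]
    have hv := congrArg (Nat.cast : ℕ → ℚ) (vander j r hrj)
    push_cast at hv
    rw [hv]
    have hsgn : ((-1:ℚ))^(j-r) = ((-1:ℚ))^(j+r) := by
      have e : j + r = (j - r) + 2*r := by omega
      rw [e, pow_add, pow_mul]
      norm_num
    rw [hsgn, dd]

private lemma legendre_eq (j : ℕ) : legendreQ j =
    ∑ m ∈ range (j+1), C ((-1:ℚ)^(j+m) * dd j m) * (C (1/2 : ℚ) * (X+1))^m := by
  have h := congrArg (⇑(aeval (C (1/2:ℚ) * (X+1)) : ℚ[X] →ₐ[ℚ] ℚ[X])) (poly_Y j)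
  simp only [map_sum, map_mul, map_pow, map_add, aeval_X, aeval_C, Polynomial.algebraMap_eq] at h
  rw [legendre_prod]
  simp only [C_mul, C_pow]
  rw [← h]
  refine Finset.sum_congr rfl fun i hi => ?_
  have hij : i ≤ j := Nat.lt_succ_iff.mp (mem_range.mp hi)
  have h2 : (2:ℚ[X]) * (C (1/2:ℚ)) = 1 := by
    rw [show (2:ℚ[X]) = C (2:ℚ) from (map_ofNat C 2).symm, ← C_mul]
    norm_num
  have hu : C (1/2:ℚ) * (X+1) + C (-1) = C (1/2:ℚ) * (X + C (-1)) := by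
    rw [C_neg, C_1]
    linear_combination h2
  rw [hu, mul_pow, mul_pow, show ((X:ℚ[X])+1) = X + C 1 by rw [C_1]]
  have hpow : (C (1/2:ℚ))^i * (C (1/2:ℚ))^(j-i) = C ((1/2:ℚ)^j) := by
    rw [← pow_add, C_pow]
    congr 1
    omega
  have hc : C (((j.choose i : ℚ))^2 / 2^j) = (C (j.choose i : ℚ))^2 * C ((1/2:ℚ)^j) := by
    rw [← C_pow, ← C_mul]
    congr 1
    rw [div_eq_mul_inv, ← inv_pow]
    norm_num
  rw [hc, ← hpow]
  ring

private lemma key_s16 (m n : ℕ) (hmn : m ≤ n) :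
    ∑ k ∈ range n, (2*(k:ℚ)+1) / (((n:ℚ)-k) * ((k:ℚ)+n+1)) * dd k m
      = dd n m * (harmonic (m+n) - harmonic m - harmonic (2*n) + harmonic n) := by
  induction n, hmn using Nat.le_induction with
  | base =>
    rw [two_mul]
    have hz : ∀ k ∈ range m, (2*(k:ℚ)+1) / (((m:ℚ)-k) * ((k:ℚ)+m+1)) * dd k m = 0 := by
      intro k hk
      have : k.choose m = 0 := Nat.choose_eq_zero_of_lt (mem_range.mp hk)
      simp [dd, this]
    rw [Finset.sum_eq_zero hz]
    ring
  | succ n hmn IH =>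
    have hmQ : (m:ℚ) ≤ n := by exact_mod_cast hmn
    have hm1 : ((n:ℚ)+1-m) ≠ 0 := by intro h; nlinarith
    set W : ℕ → ℚ := fun x =>
      -2*(x:ℚ)*((x:ℚ)-m)*dd x m / (((n:ℚ)+1-m)*((n:ℚ)+1-x)*((n:ℚ)+1+x)) with hW
    have tele : ∀ k ∈ range n,
        (2*(k:ℚ)+1) / ((((n:ℚ)+1)-k) * ((k:ℚ)+((n:ℚ)+1)+1)) * dd k m
          = ((n:ℚ)+1+m)/((n:ℚ)+1-m) * ((2*(k:ℚ)+1)/(((n:ℚ)-k)*((k:ℚ)+n+1)) * dd k m)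
            + (W (k+1) - W k) := by
      intro k hk
      have hkn : k < n := mem_range.mp hk
      have hknQ : (k:ℚ) < n := by exact_mod_cast hkn
      have d1 : ((n:ℚ)-k) ≠ 0 := by intro h; nlinarith
      have d2 : ((n:ℚ)+1-k) ≠ 0 := by intro h; nlinarith
      have d2' : ((n:ℚ)+1-((k:ℚ)+1)) ≠ 0 := by intro h; nlinarith
      have d3 : ((k:ℚ)+n+1) ≠ 0 := by positivity
      have d4 : ((k:ℚ)+((n:ℚ)+1)+1) ≠ 0 := by positivity
      have d5 : ((n:ℚ)+1+k) ≠ 0 := by positivity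
      have d6 : ((n:ℚ)+1+((k:ℚ)+1)) ≠ 0 := by positivity
      have d7 : ((n:ℚ)+2+k) ≠ 0 := by positivity
      have hnum := dd_succ k m
      have hW1 : W (k+1) = (-2*((k:ℚ)+1)*(dd k m * ((k:ℚ)+1+m)))
          / (((n:ℚ)+1-m)*((n:ℚ)-k)*((n:ℚ)+2+k)) := by
        simp only [hW]
        push_cast
        rw [div_eq_div_iff (mul_ne_zero (mul_ne_zero hm1 d2') d6)
          (mul_ne_zero (mul_ne_zero hm1 d1) d7)]
        linear_combination (-2*((k:ℚ)+1) * (((n:ℚ)+1-m)*((n:ℚ)-k)*((n:ℚ)+2+k))) * hnum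
      rw [hW1]
      simp only [hW]
      field_simp
      ring
    rw [Finset.sum_range_succ]
    push_cast
    rw [Finset.sum_congr rfl tele, Finset.sum_add_distrib, ← Finset.mul_sum,
      Finset.sum_range_sub, IH]
    have hW0 : W 0 = 0 := by simp [hW]
    rw [hW0, sub_zero]
    have e1 : m + (n+1) = (m+n)+1 := by omega
    have e2 : 2*(n+1) = (2*n+1)+1 := by omega
    rw [e1, e2, harmonic_succ, harmonic_succ, harmonic_succ]
    have hnn := dd_succ n m
    have hD : dd (n+1) m = dd n m * ((n:ℚ)+1+m)/((n:ℚ)+1-m) := by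
      field_simp
      linear_combination hnn
    rw [hD]
    simp only [hW]
    have hA : ((m:ℚ)+n+1) ≠ 0 := by positivity
    have hB : (2*(n:ℚ)+1) ≠ 0 := by positivity
    have hC : (2*(n:ℚ)+2) ≠ 0 := by positivity
    have hD4 : ((n:ℚ)+1) ≠ 0 := by positivity
    have hE : ((n:ℚ)+1-(n:ℚ)) ≠ 0 := by intro h; nlinarith
    have hF : ((n:ℚ)+1+n) ≠ 0 := by positivity
    push_cast
    rw [harmonic_succ n, show (n:ℚ)+1-(n:ℚ) = 1 by ring]
    push_cast
    field_simp
    ring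

private lemma scalar_final (n m : ℕ) (hm : m ≤ n) :
    2*(harmonic (2*n) - harmonic n) * ((-1:ℚ)^(n+m) * dd n m)
      + ∑ k ∈ range n, 2 * ((-1:ℚ)^(k+n) * (2*(k:ℚ)+1) / (((n:ℚ)-k)*((k:ℚ)+n+1))
          * ((-1:ℚ)^(k+m) * dd k m))
    = 2 * ((-1:ℚ)^(m+n) * ((m+n).factorial:ℚ)
        / ((m.factorial:ℚ)^2 * ((n-m).factorial:ℚ)) * (harmonic (m+n) - harmonic m)) := by
  have hdf := dd_fact hm
  have hsgn : ∀ k ∈ range n,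
      2 * ((-1:ℚ)^(k+n) * (2*(k:ℚ)+1) / (((n:ℚ)-k)*((k:ℚ)+n+1)) * ((-1:ℚ)^(k+m) * dd k m))
        = (2*(-1:ℚ)^(n+m)) * ((2*(k:ℚ)+1) / (((n:ℚ)-k)*((k:ℚ)+n+1)) * dd k m) := by
    intro k _
    have hp : (-1:ℚ)^(k+n) * (-1:ℚ)^(k+m) = (-1:ℚ)^(n+m) := by
      rw [← pow_add, show (k+n)+(k+m) = 2*k + (n+m) from by omega, pow_add, pow_mul]
      norm_num
    linear_combination (2 * (2*(k:ℚ)+1) / (((n:ℚ)-k)*((k:ℚ)+n+1)) * dd k m) * hp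
  rw [Finset.sum_congr rfl hsgn, ← Finset.mul_sum, key_s16 m n hm, mul_div_assoc, hdf]
  ring

theorem stmt_16 (n : ℕ) :
    C (2 * (harmonic (2 * n) - harmonic n)) * legendreQ n +
        2 * ∑ k ∈ range n,
          C ((-1 : ℚ) ^ (k + n) * (2 * (k : ℚ) + 1) / (((n : ℚ) - k) * ((k : ℚ) + n + 1))) *
            legendreQ k =
      2 * ∑ k ∈ range (n + 1),
          C ((-1 : ℚ) ^ (k + n) * ((k + n).factorial : ℚ) /
                ((k.factorial : ℚ) ^ 2 * ((n - k).factorial : ℚ)) *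
              (harmonic (k + n) - harmonic k)) *
            (C (1 / 2 : ℚ) * (X + 1)) ^ k := by
  simp only [legendre_eq]
  simp only [Finset.mul_sum]
  have hext : ∀ k ∈ range n,
      ∑ m ∈ range (k+1), (2:ℚ[X]) *
        (C ((-1:ℚ)^(k+n) * (2*(k:ℚ)+1) / (((n:ℚ)-k)*((k:ℚ)+n+1))) *
          (C ((-1:ℚ)^(k+m) * dd k m) * (C (1/2:ℚ) * (X+1))^m))
      = ∑ m ∈ range (n+1), (2:ℚ[X]) *
        (C ((-1:ℚ)^(k+n) * (2*(k:ℚ)+1) / (((n:ℚ)-k)*((k:ℚ)+n+1))) *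
          (C ((-1:ℚ)^(k+m) * dd k m) * (C (1/2:ℚ) * (X+1))^m)) := by
    intro k hk
    have hkn : k < n := mem_range.mp hk
    apply Finset.sum_subset (Finset.range_subset_range.mpr (by omega))
    intro m _ hnm
    have hkm : k < m := by
      have := mem_range.not.mp hnm
      omega
    have hc0 : dd k m = 0 := by simp [dd, Nat.choose_eq_zero_of_lt hkm]
    simp [hc0]
  rw [Finset.sum_congr rfl hext, Finset.sum_comm, ← Finset.sum_add_distrib]
  refine Finset.sum_congr rfl fun m hm => ?_
  have hmn : m ≤ n := Nat.lt_succ_iff.mp (mem_range.mp hm)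
  have h2C : (2:ℚ[X]) = C (2:ℚ) := (map_ofNat C 2).symm
  have hk2 : ∀ k ∈ range n,
      (2:ℚ[X]) * (C ((-1:ℚ)^(k+n) * (2*(k:ℚ)+1) / (((n:ℚ)-k)*((k:ℚ)+n+1))) *
        (C ((-1:ℚ)^(k+m) * dd k m) * (C (1/2:ℚ) * (X+1))^m))
      = C (2 * ((-1:ℚ)^(k+n) * (2*(k:ℚ)+1) / (((n:ℚ)-k)*((k:ℚ)+n+1))
          * ((-1:ℚ)^(k+m) * dd k m))) * (C (1/2:ℚ) * (X+1))^m := by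
    intro k _
    rw [map_mul C (2:ℚ) (((-1:ℚ)^(k+n) * (2*(k:ℚ)+1) / (((n:ℚ)-k)*((k:ℚ)+n+1))
          * ((-1:ℚ)^(k+m) * dd k m))),
      map_mul C ((-1:ℚ)^(k+n) * (2*(k:ℚ)+1) / (((n:ℚ)-k)*((k:ℚ)+n+1))) ((-1:ℚ)^(k+m) * dd k m),
      ← h2C, mul_assoc, mul_assoc (C ((-1:ℚ)^(k+n) * (2*(k:ℚ)+1) / (((n:ℚ)-k)*((k:ℚ)+n+1))))
        (C ((-1:ℚ)^(k+m) * dd k m)) ((C (1/2:ℚ) * (X+1))^m)]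
  rw [Finset.sum_congr rfl hk2, ← Finset.sum_mul]
  rw [show (C (2 * (harmonic (2 * n) - harmonic n)) *
      (C ((-1:ℚ)^(n+m) * dd n m) * (C (1/2:ℚ) * (X+1))^m))
    = C (2 * (harmonic (2 * n) - harmonic n) * ((-1:ℚ)^(n+m) * dd n m))
        * (C (1/2:ℚ) * (X+1))^m from by
      rw [map_mul C (2 * (harmonic (2 * n) - harmonic n)) ((-1:ℚ)^(n+m) * dd n m), mul_assoc]]
  rw [← map_sum, ← add_mul, ← C_add]
  rw [show (2:ℚ[X]) * (C ((-1:ℚ)^(m+n) * ((m+n).factorial:ℚ) /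
        ((m.factorial:ℚ)^2 * ((n-m).factorial:ℚ)) * (harmonic (m+n) - harmonic m)) *
      (C (1/2:ℚ) * (X+1))^m)
    = C (2 * ((-1:ℚ)^(m+n) * ((m+n).factorial:ℚ) /
        ((m.factorial:ℚ)^2 * ((n-m).factorial:ℚ)) * (harmonic (m+n) - harmonic m)))
        * (C (1/2:ℚ) * (X+1))^m from by
      rw [map_mul C (2:ℚ) ((-1:ℚ)^(m+n) * ((m+n).factorial:ℚ) /
        ((m.factorial:ℚ)^2 * ((n-m).factorial:ℚ)) * (harmonic (m+n) - harmonic m)),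
        ← h2C, mul_assoc]]
  congr 1
  exact congrArg C (scalar_final n m hmn)
end

section
/- For nonnegative integers n and m with m > n, and for z ∈ ℂ with Im(z) ≠ 0, define Qₙ^{m}(z) := (-1)^{n+1} 2ⁿ n! (z²-1)^{m/2} d^{m-n-1}/dz^{m-n-1}[(z²-1)^{-n-1}]. Then equivalently Qₙ^{m}(z) = (1/(2^{n+1} n!)) (z²-1)^{m/2} d^{n+m}/dz^{n+m}[(z²-1)ⁿ log((z+1)/(z-1))]; i.e., the rational-function identity (-1)^{n+1} 2^{2n+1} (n!)² · d^{m-n-1}/dz^{m-n-1}[(z²-1)^{-n-1}] = d^{n+m}/dz^{n+m}[(z²-1)ⁿ log((z+1)/(z-1))] holds for m > n ≥ 0. -/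
/-!
Write `fₙ(w) = (w² - 1)ⁿ log ((w + 1) / (w - 1))`. The logarithmic factor has derivative
`-2 / (w² - 1)`, so `D f₀ = -2 (w² - 1)⁻¹`. Since `fₙ₊₁ = (w² - 1) fₙ`, Leibniz' rule writes
`D^(2n+3) fₙ₊₁` through `D^(2n+1) fₙ` and its first two derivatives; inductively
`D^(2n+1) fₙ = cₙ (w² - 1)^(-n-1)`, and the second-order identity satisfied by `(w² - 1)^e`
collapses the result to `-4 (n + 1)² cₙ (w² - 1)^(-n-2)`. The theorem is the `(m - n - 1)`-st
derivative of `D^(2n+1) fₙ = cₙ (w² - 1)^(-n-1)`, valid on the open set where the logarithm is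
holomorphic.
-/

open Complex Set Topology

lemma iteratedDeriv_add_eq_of_eqOn {𝕜 F : Type*} [NontriviallyNormedField 𝕜]
    [NormedAddCommGroup F] [NormedSpace 𝕜 F] {f g : 𝕜 → F} {s : Set 𝕜} {x : 𝕜} {m : ℕ}
    (hs : IsOpen s) (h : EqOn (iteratedDeriv m f) g s) (hx : x ∈ s) (k : ℕ) :
    iteratedDeriv (m + k) f x = iteratedDeriv k g x := by
  rw [add_comm, iteratedDeriv_eq_iterate, Function.iterate_add_apply, ← iteratedDeriv_eq_iterate,
    ← iteratedDeriv_eq_iterate]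
  exact h.iteratedDeriv_of_isOpen hs k hx

section

variable {𝕜 : Type*} [NontriviallyNormedField 𝕜] {x : 𝕜}

lemma iteratedDeriv_succ_sq_sub_one (k : ℕ) :
    iteratedDeriv (k + 1) (fun w : 𝕜 => w ^ 2 - 1) x = iteratedDeriv (k + 1) (· ^ 2) x := by
  rw [iteratedDeriv_fun_sub (by fun_prop) (by fun_prop), iteratedDeriv_const]
  simp

lemma iteratedDeriv_sq_sub_one_mul {u : 𝕜 → 𝕜} (k : ℕ) (hu : ContDiffAt 𝕜 (k + 2) u x) :
    iteratedDeriv (k + 2) (fun w => (w ^ 2 - 1) * u w) x =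
      (x ^ 2 - 1) * iteratedDeriv (k + 2) u x + 2 * (k + 2) * x * iteratedDeriv (k + 1) u x +
        (k + 2) * (k + 1) * iteratedDeriv k u x := by
  have hchoose : ((k + 2).choose 2 : 𝕜) * 2 = (k + 2) * (k + 1) := by
    have h : (k + 2).choose 2 * 2 = (k + 2) * (k + 1) := by
      simpa using (Nat.add_one_mul_choose_eq (k + 1) 1).symm
    simpa using congrArg (Nat.cast : ℕ → 𝕜) h
  rw [iteratedDeriv_fun_mul (by fun_prop) hu]
  simp only [Finset.sum_range_succ', iteratedDeriv_succ_sq_sub_one, iteratedDeriv_pow,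
    Nat.descFactorial_succ, Nat.cast_mul, Nat.reduceSubDiff, le_add_iff_nonneg_left, zero_le,
    Nat.sub_eq_zero_of_le, pow_zero, mul_one, Nat.cast_zero, zero_mul, mul_zero,
    Finset.sum_const_zero, zero_add, Nat.reduceAdd, tsub_zero, Nat.cast_one, Nat.cast_ofNat,
    Nat.descFactorial_zero, one_mul, Nat.choose_one_right, Nat.cast_add, pow_one,
    Nat.choose_zero_right, iteratedDeriv_zero]
  linear_combination iteratedDeriv k u x * hchoose

lemma hasDerivAt_sq_sub_one_zpow (e : ℤ) (hx : x ^ 2 - 1 ≠ 0) :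
    HasDerivAt (fun w : 𝕜 => (w ^ 2 - 1) ^ e) (2 * e * x * (x ^ 2 - 1) ^ (e - 1)) x := by
  have := (hasDerivAt_zpow e _ (Or.inl hx)).comp x ((hasDerivAt_pow 2 x).sub_const 1)
  exact this.congr_deriv (by simp only [Nat.cast_ofNat, Nat.add_one_sub_one, pow_one]; ring)

lemma sq_sub_one_zpow_ode (e : ℤ) (hx : x ^ 2 - 1 ≠ 0) :
    (x ^ 2 - 1) * iteratedDeriv 2 (fun w : 𝕜 => (w ^ 2 - 1) ^ e) x +
        2 * (1 - 2 * e) * x * iteratedDeriv 1 (fun w : 𝕜 => (w ^ 2 - 1) ^ e) x +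
        (1 - 2 * e) * (-2 * e) * (x ^ 2 - 1) ^ e =
      -4 * e ^ 2 * (x ^ 2 - 1) ^ (e - 1) := by
  have hderiv : deriv (fun w : 𝕜 => (w ^ 2 - 1) ^ e) =ᶠ[𝓝 x]
      fun w => 2 * e * w * (w ^ 2 - 1) ^ (e - 1) := by
    filter_upwards [(by fun_prop : Continuous fun w : 𝕜 => w ^ 2 - 1).continuousAt.eventually_ne hx]
      with w hw
    exact (hasDerivAt_sq_sub_one_zpow e hw).deriv
  have hderiv2 := (((hasDerivAt_id x).const_mul (2 * e : 𝕜)).fun_mul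
    (hasDerivAt_sq_sub_one_zpow (e - 1) hx)).deriv
  simp only [id] at hderiv2
  rw [iteratedDeriv_succ, iteratedDeriv_one, hderiv.deriv_eq, hderiv2,
    (hasDerivAt_sq_sub_one_zpow e hx).deriv]
  have h₁ : (x ^ 2 - 1) ^ e = (x ^ 2 - 1) ^ (e - 1) * (x ^ 2 - 1) := by
    rw [← zpow_add_one₀ hx, sub_add_cancel]
  have h₂ : (x ^ 2 - 1) ^ (e - 1) = (x ^ 2 - 1) ^ (e - 1 - 1) * (x ^ 2 - 1) := by
    rw [← zpow_add_one₀ hx, sub_add_cancel]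
  rw [h₁, h₂]
  push_cast
  ring

end

/-- This is `ℂ ∖ [-1, 1]`; `z = 1` is excluded because the junk value `2 / 0 = 0` is not in
`slitPlane`. -/
def logRatioDomain : Set ℂ := (fun z => (z + 1) / (z - 1)) ⁻¹' slitPlane

lemma isOpen_logRatioDomain : IsOpen logRatioDomain := by
  have hcont : ContinuousOn (fun z : ℂ => (z + 1) / (z - 1)) {1}ᶜ :=
    (continuousOn_id.add continuousOn_const).div (continuousOn_id.sub continuousOn_const)
      fun z hz => sub_ne_zero.mpr hz
  have hsub : logRatioDomain ⊆ {1}ᶜ :=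
    fun z hz (hz1 : z = 1) => slitPlane_ne_zero hz (by simp [hz1])
  rw [← inter_eq_right.mpr hsub]
  exact hcont.isOpen_inter_preimage isOpen_compl_singleton isOpen_slitPlane

variable {z : ℂ}

lemma add_one_ne_zero_and_sub_one_ne_zero_of_mem_logRatioDomain (hz : z ∈ logRatioDomain) :
    z + 1 ≠ 0 ∧ z - 1 ≠ 0 :=
  div_ne_zero_iff.mp (slitPlane_ne_zero hz)

lemma sq_sub_one_ne_zero_of_mem_logRatioDomain (hz : z ∈ logRatioDomain) : z ^ 2 - 1 ≠ 0 := by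
  obtain ⟨h₁, h₂⟩ := add_one_ne_zero_and_sub_one_ne_zero_of_mem_logRatioDomain hz
  rw [show z ^ 2 - 1 = (z + 1) * (z - 1) by ring]
  exact mul_ne_zero h₁ h₂

lemma mem_logRatioDomain_of_not_real_le_one (hz : ¬(z.im = 0 ∧ z.re ≤ 1)) :
    z ∈ logRatioDomain := by
  rw [logRatioDomain, mem_preimage, mem_slitPlane_iff]
  by_cases hzi : z.im = 0
  · have hre : 1 < z.re := by grind
    left
    have hre' : ((z + 1) / (z - 1)).re = (z.re + 1) / (z.re - 1) := by
      rw [div_re]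
      simp only [add_re, one_re, sub_re, normSq_apply, sub_im, hzi, one_im, sub_self, mul_zero,
        add_zero, add_im, zero_div]
      field_simp
    rw [hre']; exact div_pos (by linarith) (by linarith)
  · right
    have him : ((z + 1) / (z - 1)).im = -2 * z.im / normSq (z - 1) := by
      simp only [div_im, add_re, add_im, sub_re, sub_im, one_re, one_im]; ring
    have : normSq (z - 1) ≠ 0 := by
      rw [normSq_eq_zero.ne]; intro h; apply hzi; simpa using congrArg im h
    rw [him]
    exact div_ne_zero (by simpa using hzi) this

lemma analyticOnNhd_sq_sub_one_pow_mul_log (n : ℕ) :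
    AnalyticOnNhd ℂ (fun w : ℂ => (w ^ 2 - 1) ^ n * log ((w + 1) / (w - 1))) logRatioDomain :=
  fun z hz => (by fun_prop : AnalyticAt ℂ (fun w : ℂ => (w ^ 2 - 1) ^ n) z).mul
    (((analyticAt_id.add analyticAt_const).div (analyticAt_id.sub analyticAt_const)
      (add_one_ne_zero_and_sub_one_ne_zero_of_mem_logRatioDomain hz).2).clog hz)

lemma hasDerivAt_log_div (hz : z ∈ logRatioDomain) :
    HasDerivAt (fun w => log ((w + 1) / (w - 1))) (-2 * (z ^ 2 - 1) ^ (-1 : ℤ)) z := by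
  obtain ⟨h₁, h₂⟩ := add_one_ne_zero_and_sub_one_ne_zero_of_mem_logRatioDomain hz
  have := (((hasDerivAt_id z).add_const 1).div ((hasDerivAt_id z).sub_const 1) h₂).clog hz
  simp only [Pi.div_apply, id] at this
  refine this.congr_deriv ?_
  have h₃ := sq_sub_one_ne_zero_of_mem_logRatioDomain hz
  rw [zpow_neg_one]
  field_simp
  ring

theorem iteratedDeriv_sq_sub_one_pow_mul_log (n : ℕ) :
    EqOn (iteratedDeriv (2 * n + 1) fun w : ℂ => (w ^ 2 - 1) ^ n * log ((w + 1) / (w - 1)))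
      (fun w => (-1 : ℂ) ^ (n + 1) * 2 ^ (2 * n + 1) * (n.factorial : ℂ) ^ 2 *
        (w ^ 2 - 1) ^ (-(n : ℤ) - 1))
      logRatioDomain := by
  induction n with
  | zero =>
    intro z hz
    simpa using (hasDerivAt_log_div hz).deriv
  | succ n ih =>
    intro z hz
    set c : ℂ := (-1 : ℂ) ^ (n + 1) * 2 ^ (2 * n + 1) * (n.factorial : ℂ) ^ 2
    set g : ℂ → ℂ := fun w => (w ^ 2 - 1) ^ (-(n : ℤ) - 1)
    have hshift (j : ℕ) : iteratedDeriv (2 * n + 1 + j)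
        (fun w : ℂ => (w ^ 2 - 1) ^ n * log ((w + 1) / (w - 1))) z = c * iteratedDeriv j g z := by
      rw [iteratedDeriv_add_eq_of_eqOn isOpen_logRatioDomain ih hz j,
        iteratedDeriv_const_mul_field]
    have hode := sq_sub_one_zpow_ode (-(n : ℤ) - 1) (sq_sub_one_ne_zero_of_mem_logRatioDomain hz)
    calc iteratedDeriv (2 * (n + 1) + 1)
          (fun w : ℂ => (w ^ 2 - 1) ^ (n + 1) * log ((w + 1) / (w - 1))) z
        = iteratedDeriv (2 * n + 1 + 2)
          (fun w : ℂ => (w ^ 2 - 1) * ((w ^ 2 - 1) ^ n * log ((w + 1) / (w - 1)))) z := by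
          rw [show 2 * (n + 1) + 1 = 2 * n + 1 + 2 by ring]
          congr with w
          ring
      _ = c * ((z ^ 2 - 1) * iteratedDeriv 2 g z +
            2 * (2 * n + 3) * z * iteratedDeriv 1 g z + (2 * n + 3) * (2 * n + 2) * g z) := by
          rw [iteratedDeriv_sq_sub_one_mul _
            (analyticOnNhd_sq_sub_one_pow_mul_log n z hz).contDiffAt, hshift 2, hshift 1, ih hz]
          push_cast
          ring
      _ = _ := by
          rw [show -((n + 1 : ℕ) : ℤ) - 1 = -(n : ℤ) - 1 - 1 by push_cast; ring,
            Nat.factorial_succ]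
          push_cast at hode ⊢
          linear_combination c * hode

theorem stmt_17 (n m : ℕ) (h : n < m) (z : ℂ) (hz : ¬(z.im = 0 ∧ z.re ≤ 1)) :
    (-1 : ℂ) ^ (n + 1) * 2 ^ (2 * n + 1) * (n.factorial : ℂ) ^ 2 *
        iteratedDeriv (m - n - 1) (fun w : ℂ => (w ^ 2 - 1) ^ (-(n : ℤ) - 1)) z =
      iteratedDeriv (n + m)
        (fun w : ℂ => (w ^ 2 - 1) ^ n * Complex.log ((w + 1) / (w - 1))) z := by
  rw [show n + m = 2 * n + 1 + (m - n - 1) by omega,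
    iteratedDeriv_add_eq_of_eqOn isOpen_logRatioDomain (iteratedDeriv_sq_sub_one_pow_mul_log n)
      (mem_logRatioDomain_of_not_real_le_one hz), iteratedDeriv_const_mul_field]
end
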